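/- arXiv:1811.12650 — 8 statements merged into one kernel-verified Lean document; each statement's English description precedes it below -/
import Mathlib

section
/- Let G be a graph with maximum degree Δ that admits a frozen (Δ+1)-colouring α. Then every colour class of α has the same size; in particular, Δ+1 divides the number of vertices of G. -/
/-!
In a frozen `(Δ+1)`-colouring every closed neighbourhood `N[v]` has at most `Δ + 1` vertices
yet sees all `Δ + 1` colours, so it contains exactly one vertex of each colour. Hence, for two
colours `c` and `c'`, sending a `c`-vertex to the unique `c'`-vertex of its closed neighbourhood
is a bijection between the two colour classes: since `x ∈ N[y] ↔ y ∈ N[x]`, doing the same from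
`c'` back to `c` inverts it.
-/

namespace SimpleGraph

variable {V β : Type*} (G : SimpleGraph V) [Fintype V] [DecidableEq V] [DecidableRel G.Adj]

def closedNeighborFinset (v : V) : Finset V := insert v (G.neighborFinset v)

variable {G}

@[simp]
theorem mem_closedNeighborFinset {u v : V} :
    u ∈ G.closedNeighborFinset v ↔ u = v ∨ G.Adj v u := by
  simp [closedNeighborFinset]

theorem mem_closedNeighborFinset_comm {u v : V} :
    u ∈ G.closedNeighborFinset v ↔ v ∈ G.closedNeighborFinset u := by
  simp only [mem_closedNeighborFinset, G.adj_comm, eq_comm]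

theorem card_closedNeighborFinset (v : V) :
    (G.closedNeighborFinset v).card = G.degree v + 1 := by
  rw [closedNeighborFinset, Finset.card_insert_of_notMem (by simp),
    card_neighborFinset_eq_degree]

theorem injOn_closedNeighborFinset_of_surjOn [Fintype β] {α : V → β} {v : V}
    (hdeg : G.degree v + 1 ≤ Fintype.card β)
    (hsurj : ∀ c, ∃ u ∈ G.closedNeighborFinset v, α u = c) :
    Set.InjOn α (G.closedNeighborFinset v) :=
  Finset.injOn_of_surjOn_of_card_le (t := Finset.univ) α (fun _ _ ↦ Finset.mem_univ _)
    (fun c _ ↦ hsurj c) (by rwa [card_closedNeighborFinset, Finset.card_univ])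

theorem card_colorClass_eq {α : V → β}
    (hinj : ∀ v, Set.InjOn α (G.closedNeighborFinset v))
    (hsurj : ∀ v c, ∃ u ∈ G.closedNeighborFinset v, α u = c) (c c' : β) :
    Nat.card {v // α v = c} = Nat.card {v // α v = c'} := by
  choose partner partner_mem partner_color using hsurj
  have partner_partner {c c' : β} {x : V} (hx : α x = c) : partner (partner x c') c = x :=
    hinj (partner x c') (partner_mem _ _) (mem_closedNeighborFinset_comm.1 (partner_mem x c'))
      (by rw [partner_color, hx])
  exact Nat.card_congr
    { toFun x := ⟨partner x c', partner_color _ _⟩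
      invFun y := ⟨partner y c, partner_color _ _⟩
      left_inv x := Subtype.ext (partner_partner x.2)
      right_inv y := Subtype.ext (partner_partner y.2) }

end SimpleGraph

theorem Fintype.card_eq_card_mul_card_fiber {V β : Type*} [Fintype V] [Fintype β] {f : V → β}
    (b₀ : β) (h : ∀ b, Nat.card {v // f v = b} = Nat.card {v // f v = b₀}) :
    Fintype.card V = Fintype.card β * Nat.card {v // f v = b₀} := by
  rw [← Nat.card_eq_fintype_card, ← Nat.card_congr (Equiv.sigmaFiberEquiv f), Nat.card_sigma,
    Finset.sum_congr rfl fun b _ ↦ h b, Finset.sum_const, Finset.card_univ, smul_eq_mul]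

theorem stmt_1_general {V : Type*} [Fintype V] [DecidableEq V] (G : SimpleGraph V)
    [DecidableRel G.Adj] (Δ : ℕ) (hΔ : ∀ v, G.degree v ≤ Δ)
    (α : V → Fin (Δ + 1))
    (hfrozen : ∀ v c, ∃ u, (u = v ∨ G.Adj v u) ∧ α u = c) :
    (∀ c c' : Fin (Δ + 1), Nat.card {v : V // α v = c} = Nat.card {v : V // α v = c'}) ∧
      (Δ + 1) ∣ Fintype.card V := by
  have hsurj : ∀ v c, ∃ u ∈ G.closedNeighborFinset v, α u = c := by
    simpa only [SimpleGraph.mem_closedNeighborFinset] using hfrozen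
  have hinj (v : V) : Set.InjOn α (G.closedNeighborFinset v) :=
    G.injOn_closedNeighborFinset_of_surjOn (by simpa using hΔ v) (hsurj v)
  have hclass := G.card_colorClass_eq hinj hsurj
  refine ⟨hclass, Dvd.intro (Nat.card {v // α v = 0}) ?_⟩
  rw [Fintype.card_eq_card_mul_card_fiber 0 (hclass · 0), Fintype.card_fin]

/-- If a graph `G` with maximum degree `Δ` admits a frozen
`(Δ+1)`-colouring `α`, then all colour classes of `α` have the same size,
and in particular `Δ+1` divides the number of vertices. -/
theorem stmt_1 {V : Type*} [Fintype V] [DecidableEq V] (G : SimpleGraph V)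
    [DecidableRel G.Adj] (Δ : ℕ) (hΔ : ∀ v, G.degree v ≤ Δ)
    (α : V → Fin (Δ + 1))
    (hproper : ∀ u v, G.Adj u v → α u ≠ α v)
    (hfrozen : ∀ v c, ∃ u, (u = v ∨ G.Adj v u) ∧ α u = c) :
    (∀ c c' : Fin (Δ + 1), Nat.card {v : V // α v = c} = Nat.card {v : V // α v = c'}) ∧
      (Δ + 1) ∣ Fintype.card V :=
  stmt_1_general G Δ hΔ α hfrozen
end

section
/- Let G be a graph with maximum degree Δ and let α be a frozen (Δ+1)-colouring of G. For every pair of distinct colours a, b ∈ Fin (Δ+1), the subgraph of G induced by the vertices coloured a or b is a perfect matching of that vertex set (i.e., it is 1-regular). -/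
/-!
Every vertex `v` has at most `Δ` neighbours, and frozenness forces them to carry all `Δ`
colours other than `α v`; so the neighbours of `v` have pairwise distinct colours. For a
vertex `v` coloured `a` (say), the neighbours coloured `a` or `b` are, by properness, exactly
those coloured `b`, and there is precisely one of them.
-/

namespace SimpleGraph

variable {V : Type*} (G : SimpleGraph V) {Δ : ℕ} {α : V → Fin (Δ + 1)} {v : V}

theorem exists_adj_colour_eq_of_frozen (hfrozen : ∀ c, ∃ u, (u = v ∨ G.Adj v u) ∧ α u = c)
    {c : Fin (Δ + 1)} (hc : c ≠ α v) : ∃ u, G.Adj v u ∧ α u = c := by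
  obtain ⟨u, rfl | hadj, rfl⟩ := hfrozen c
  · exact absurd rfl hc
  · exact ⟨u, hadj, rfl⟩

theorem injOn_neighborFinset_of_frozen [Fintype V] [DecidableRel G.Adj] (hΔ : G.degree v ≤ Δ)
    (hfrozen : ∀ c, ∃ u, (u = v ∨ G.Adj v u) ∧ α u = c) :
    Set.InjOn α (G.neighborFinset v) := by
  have hcover : Finset.univ.erase (α v) ⊆ (G.neighborFinset v).image α := fun c hc => by
    obtain ⟨u, hadj, rfl⟩ :=
      G.exists_adj_colour_eq_of_frozen hfrozen (Finset.ne_of_mem_erase hc)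
    exact Finset.mem_image_of_mem α ((G.mem_neighborFinset v u).mpr hadj)
  refine Finset.injOn_of_card_image_eq (le_antisymm Finset.card_image_le ?_)
  calc (G.neighborFinset v).card = G.degree v := G.card_neighborFinset_eq_degree v
    _ ≤ Δ := hΔ
    _ = (Finset.univ.erase (α v)).card := by simp
    _ ≤ ((G.neighborFinset v).image α).card := Finset.card_le_card hcover

end SimpleGraph

theorem stmt_2_general {V : Type*} [Fintype V] (G : SimpleGraph V)
    [DecidableRel G.Adj] (Δ : ℕ) (hΔ : ∀ v, G.degree v ≤ Δ)
    (α : V → Fin (Δ + 1))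
    (hproper : ∀ u v, G.Adj u v → α u ≠ α v)
    (hfrozen : ∀ v c, ∃ u, (u = v ∨ G.Adj v u) ∧ α u = c) :
    ∀ a b : Fin (Δ + 1), a ≠ b → ∀ v : V, (α v = a ∨ α v = b) →
      ∃! u : V, G.Adj v u ∧ (α u = a ∨ α u = b) := by
  intro a b hab v hv
  obtain ⟨c, hcab, hcv, hother⟩ : ∃ c, (c = a ∨ c = b) ∧ c ≠ α v ∧
      ∀ d, (d = a ∨ d = b) → d ≠ α v → d = c := by
    rcases hv with rfl | rfl
    · exact ⟨b, Or.inr rfl, hab.symm, by grind⟩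
    · exact ⟨a, Or.inl rfl, hab, by grind⟩
  obtain ⟨u, hadj, huc⟩ := G.exists_adj_colour_eq_of_frozen (hfrozen v) hcv
  refine ⟨u, ⟨hadj, huc ▸ hcab⟩, fun w ⟨hadjw, hw⟩ => ?_⟩
  have hwc : α w = c := hother _ hw (hproper v w hadjw).symm
  exact G.injOn_neighborFinset_of_frozen (hΔ v) (hfrozen v)
    ((G.mem_neighborFinset v w).mpr hadjw) ((G.mem_neighborFinset v u).mpr hadj)
    (hwc.trans huc.symm)

/-- If `α` is a frozen `(Δ+1)`-colouring of a graph `G` with maximum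
degree `Δ`, then for every pair of distinct colours `a, b`, the subgraph induced by
the vertices coloured `a` or `b` is `1`-regular (a perfect matching on that set). -/
theorem stmt_2 {V : Type*} [Fintype V] [DecidableEq V] (G : SimpleGraph V)
    [DecidableRel G.Adj] (Δ : ℕ) (hΔ : ∀ v, G.degree v ≤ Δ)
    (α : V → Fin (Δ + 1))
    (hproper : ∀ u v, G.Adj u v → α u ≠ α v)
    (hfrozen : ∀ v c, ∃ u, (u = v ∨ G.Adj v u) ∧ α u = c) :
    ∀ a b : Fin (Δ + 1), a ≠ b → ∀ v : V, (α v = a ∨ α v = b) →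
      ∃! u : V, G.Adj v u ∧ (α u = a ∨ α u = b) :=
  stmt_2_general G Δ hΔ α hproper hfrozen
end

section
/- A graph G on n vertices with maximum degree Δ admits a frozen (Δ+1)-colouring if and only if G is isomorphic to an (n/(Δ+1))-lift of the complete graph K_{Δ+1}. -/
/-- `H` is a `k`-lift of the complete graph `K_m` (vertex set `Fin m × Fin k`):
no edges inside a fibre, and between any two distinct fibres the edges form a
perfect matching. -/
def IsLiftOfComplete {m k : ℕ} (H : SimpleGraph (Fin m × Fin k)) : Prop :=
  (∀ (u : Fin m) (i i' : Fin k), ¬ H.Adj (u, i) (u, i')) ∧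
  (∀ u u' : Fin m, u ≠ u' → ∀ i : Fin k, ∃! i' : Fin k, H.Adj (u, i) (u', i'))

section aux

variable {V : Type*} [Fintype V] [DecidableEq V] (G : SimpleGraph V)
    [DecidableRel G.Adj] (Δ : ℕ)

/-- In a frozen colouring, each vertex has a unique neighbour of each colour
different from its own. -/
lemma frozen_key (hΔ : ∀ v, G.degree v ≤ Δ) (α : V → Fin (Δ + 1))
    (hfro : ∀ v c, ∃ u, (u = v ∨ G.Adj v u) ∧ α u = c)
    (v : V) (c : Fin (Δ + 1)) (hc : c ≠ α v) :
    ∃! u, G.Adj v u ∧ α u = c := by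
  classical
  set N : Finset V := insert v (G.neighborFinset v) with hN
  have hmemN : ∀ u, u ∈ N ↔ u = v ∨ G.Adj v u := by
    intro u
    simp [hN, SimpleGraph.mem_neighborFinset]
  have himg : N.image α = Finset.univ := by
    apply Finset.eq_univ_of_forall
    intro d
    obtain ⟨u, hu, hcol⟩ := hfro v d
    exact Finset.mem_image.2 ⟨u, (hmemN u).2 hu, hcol⟩
  have hNcard : N.card ≤ Δ + 1 := by
    calc N.card ≤ (G.neighborFinset v).card + 1 := Finset.card_insert_le _ _
    _ ≤ Δ + 1 := by
        have := hΔ v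
        rw [← SimpleGraph.card_neighborFinset_eq_degree] at this
        omega
  have hcardimg : (N.image α).card = N.card := by
    have h1 : (N.image α).card = Δ + 1 := by rw [himg]; simp
    have h2 : (N.image α).card ≤ N.card := Finset.card_image_le
    omega
  have hinj : Set.InjOn α N := Finset.card_image_iff.1 hcardimg
  obtain ⟨u, hu, hcol⟩ := hfro v c
  have hu' : G.Adj v u := by
    rcases hu with rfl | h
    · exact absurd hcol.symm hc
    · exact h
  refine ⟨u, ⟨hu', hcol⟩, ?_⟩
  rintro w ⟨hw, hwc⟩
  exact hinj ((hmemN w).2 (Or.inr hw)) ((hmemN u).2 (Or.inr hu')) (hwc.trans hcol.symm)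

end aux

/-- A graph `G` on `n` vertices with maximum degree `Δ` admits a frozen
`(Δ+1)`-colouring iff `G` is isomorphic to an `(n/(Δ+1))`-lift of `K_{Δ+1}`. -/
theorem stmt_4 {V : Type*} [Fintype V] [DecidableEq V] (G : SimpleGraph V)
    [DecidableRel G.Adj] (Δ : ℕ) (hΔ : ∀ v, G.degree v ≤ Δ) :
    (∃ α : V → Fin (Δ + 1), (∀ u v, G.Adj u v → α u ≠ α v) ∧
        (∀ v c, ∃ u, (u = v ∨ G.Adj v u) ∧ α u = c)) ↔
      (∃ k : ℕ, Fintype.card V = k * (Δ + 1) ∧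
        ∃ H : SimpleGraph (Fin (Δ + 1) × Fin k),
          IsLiftOfComplete H ∧ Nonempty (G ≃g H)) := by
  classical
  constructor
  · rintro ⟨α, hprop, hfro⟩
    have key := frozen_key G Δ hΔ α hfro
    -- the unique neighbour of colour `c`
    set nbr : V → Fin (Δ + 1) → V := fun v c =>
      if h : c ≠ α v then (key v c h).exists.choose else v with hnbr
    have hnbr_adj : ∀ v c (h : c ≠ α v), G.Adj v (nbr v c) ∧ α (nbr v c) = c := by
      intro v c h
      simp only [hnbr, dif_pos h]
      exact (key v c h).exists.choose_spec
    have hnbr_uniq : ∀ v c (h : c ≠ α v) w, G.Adj v w → α w = c → w = nbr v c := by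
      intro v c h w hadj hcol
      exact (key v c h).unique ⟨hadj, hcol⟩ ((hnbr_adj v c h))
    -- colour classes
    set C : Fin (Δ + 1) → Finset V := fun c => Finset.univ.filter (fun v => α v = c)
      with hC
    have hmemC : ∀ c v, v ∈ C c ↔ α v = c := by intro c v; simp [hC]
    have hCeq : ∀ c c', (C c).card = (C c').card := by
      have main : ∀ c c', c ≠ c' → (C c).card = (C c').card := by
        intro c c' hne
        apply Finset.card_bij' (fun v _ => nbr v c') (fun w _ => nbr w c)
        · intro v hv
          have hcv : α v = c := (hmemC c v).1 hv
          have h : c' ≠ α v := by rw [hcv]; exact hne.symm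
          exact (hmemC c' _).2 (hnbr_adj v c' h).2
        · intro w hw
          have hcw : α w = c' := (hmemC c' w).1 hw
          have h : c ≠ α w := by rw [hcw]; exact hne
          exact (hmemC c _).2 (hnbr_adj w c h).2
        · intro v hv
          have hcv : α v = c := (hmemC c v).1 hv
          have h : c' ≠ α v := by rw [hcv]; exact hne.symm
          obtain ⟨hadj, hcol⟩ := hnbr_adj v c' h
          have h2 : c ≠ α (nbr v c') := by rw [hcol]; exact hne
          exact (hnbr_uniq (nbr v c') c h2 v hadj.symm hcv).symm
        · intro w hw
          have hcw : α w = c' := (hmemC c' w).1 hw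
          have h : c ≠ α w := by rw [hcw]; exact hne
          obtain ⟨hadj, hcol⟩ := hnbr_adj w c h
          have h2 : c' ≠ α (nbr w c) := by rw [hcol]; exact hne.symm
          exact (hnbr_uniq (nbr w c) c' h2 w hadj.symm hcw).symm
      intro c c'
      by_cases h : c = c'
      · rw [h]
      · exact main c c' h
    set k := (C 0).card with hk
    have hCk : ∀ c, (C c).card = k := fun c => hCeq c 0
    have hcard : Fintype.card V = k * (Δ + 1) := by
      have : (Finset.univ : Finset V).card = ∑ c : Fin (Δ + 1), (C c).card := by
        apply Finset.card_eq_sum_card_fiberwise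
        intro v _
        exact Finset.mem_univ (α v)
      rw [Fintype.card, this]
      simp [hCk, mul_comm]
    have hcardsub : ∀ c, Fintype.card {v // α v = c} = k := by
      intro c
      rw [Fintype.card_subtype]
      exact hCk c
    set eqc : ∀ c : Fin (Δ + 1), {v // α v = c} ≃ Fin k :=
      fun c => Fintype.equivFinOfCardEq (hcardsub c) with heqc
    set φ : V ≃ Fin (Δ + 1) × Fin k :=
      (Equiv.sigmaFiberEquiv α).symm.trans
        ((Equiv.sigmaCongrRight eqc).trans (Equiv.sigmaEquivProd (Fin (Δ + 1)) (Fin k)))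
      with hφ
    have hφ1 : ∀ v, (φ v).1 = α v := by intro v; rfl
    have hφ1' : ∀ x, α (φ.symm x) = x.1 := by
      intro x
      have := hφ1 (φ.symm x)
      rw [Equiv.apply_symm_apply] at this
      exact this.symm
    refine ⟨k, hcard, ⟨fun x y => G.Adj (φ.symm x) (φ.symm y), ⟨fun x y h => h.symm⟩,
      ⟨fun x h => G.loopless.irrefl _ h⟩⟩, ⟨?_, ?_⟩, ⟨⟨φ, ?_⟩⟩⟩
    · -- no edges inside a fibre
      intro u i i' h
      exact hprop _ _ h (by rw [hφ1' (u, i), hφ1' (u, i')])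
    · -- perfect matchings between fibres
      intro u u' hne i
      set v := φ.symm (u, i) with hv
      have hαv : α v = u := hφ1' (u, i)
      have hu' : u' ≠ α v := by rw [hαv]; exact hne.symm
      obtain ⟨hadj, hcol⟩ := hnbr_adj v u' hu'
      have hpair : φ (nbr v u') = (u', (φ (nbr v u')).2) :=
        Prod.ext ((hφ1 (nbr v u')).trans hcol) rfl
      refine ⟨(φ (nbr v u')).2, ?_, ?_⟩
      · show G.Adj (φ.symm (u, i)) (φ.symm (u', (φ (nbr v u')).2))
        rw [← hpair, Equiv.symm_apply_apply]
        exact hadj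
      · intro j hj
        have hw : G.Adj v (φ.symm (u', j)) := hj
        have hwc : α (φ.symm (u', j)) = u' := hφ1' (u', j)
        have h1 := hnbr_uniq v u' hu' _ hw hwc
        have h2 := congrArg φ h1
        rw [Equiv.apply_symm_apply, hpair] at h2
        exact (Prod.ext_iff.1 h2).2
    · -- iso
      intro a b
      show G.Adj (φ.symm (φ a)) (φ.symm (φ b)) ↔ G.Adj a b
      rw [Equiv.symm_apply_apply, Equiv.symm_apply_apply]
  · rintro ⟨k, hcard, H, ⟨hH1, hH2⟩, ⟨e⟩⟩
    refine ⟨fun v => (e v).1, ?_, ?_⟩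
    · intro u v hadj heq
      have h : H.Adj (e u) (e v) := e.map_adj_iff.2 hadj
      have heq' : (e u).1 = (e v).1 := heq
      have h3 : ((e u).1, (e v).2) = e v := by rw [heq']
      apply hH1 (e u).1 (e u).2 (e v).2
      rw [h3, Prod.mk.eta]
      exact h
    · intro v c
      by_cases h : c = (e v).1
      · exact ⟨v, Or.inl rfl, h.symm⟩
      · obtain ⟨i', hi', _⟩ := hH2 (e v).1 c (Ne.symm h) (e v).2
        refine ⟨e.symm (c, i'), Or.inr ?_, ?_⟩
        · have : H.Adj (e v) (c, i') := by rwa [Prod.mk.eta] at hi'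
          have h2 : H.Adj (e v) (e (e.symm (c, i'))) := by
            rwa [RelIso.apply_symm_apply]
          exact e.map_adj_iff.1 h2
        · simp
end

section
/- Let G be a graph with maximum degree Δ, let X be a module of G, and let α be a frozen (Δ+1)-colouring of G. If β is obtained from α by permuting the colours appearing on X (via any permutation of the colour set applied only to vertices of X that fixes colours not appearing on X, equivalently by a transposition of two colours a, b both appearing on X, swapping them on X only), then β is also a frozen (Δ+1)-colouring of G. -/
/-!
Recolour by a permutation `σ` of the colours that moves only colours appearing on the module `X`.
A vertex outside `X` with a neighbour in `X` is adjacent to all of `X`, so by properness its colour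
does not appear on `X` and is fixed by `σ`; hence on every edge meeting `X` the new colouring is
`σ ∘ α` at both ends, and properness is preserved by injectivity of `σ`. For frozenness, only a
colour that a closed neighbourhood sees just inside `X` needs care: it appears on `X`, hence so does
its `σ`-preimage, and `α` shows that preimage on a vertex of the neighbourhood recoloured by `σ`
(a vertex of `X` when the centre lies outside `X`, any vertex of the neighbourhood otherwise).
-/

namespace SimpleGraph

variable {V C : Type*} {G : SimpleGraph V} {X : Set V} {α β : V → C}

variable (G) in
def IsModule (X : Set V) : Prop :=
  ∀ v ∉ X, (∀ x ∈ X, G.Adj v x) ∨ ∀ x ∈ X, ¬ G.Adj v x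

variable (G) in
def IsProperColoring (α : V → C) : Prop :=
  ∀ u v, G.Adj u v → α u ≠ α v

variable (G) in
def IsFrozenColoring (α : V → C) : Prop :=
  ∀ v c, ∃ u, (u = v ∨ G.Adj v u) ∧ α u = c

theorem IsModule.adj_of_adj (hX : G.IsModule X) {v x y : V} (hv : v ∉ X) (hx : x ∈ X)
    (hvx : G.Adj v x) (hy : y ∈ X) : G.Adj v y :=
  (hX v hv).resolve_right (fun h ↦ h x hx hvx) y hy

theorem IsProperColoring.notMem_image_of_adj (hα : G.IsProperColoring α) (hX : G.IsModule X)
    {v x : V} (hv : v ∉ X) (hx : x ∈ X) (hvx : G.Adj v x) : α v ∉ α '' X := by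
  rintro ⟨y, hy, hyv⟩
  exact hα v y (hX.adj_of_adj hv hx hvx hy) hyv.symm

theorem _root_.Equiv.Perm.symm_apply_mem_of_forall_notMem {S : Set C} {σ : Equiv.Perm C}
    (hσ : ∀ c ∉ S, σ c = c) {c : C} (hc : c ∈ S) : σ.symm c ∈ S := by
  by_contra h
  have hfix := hσ _ h
  rw [Equiv.apply_symm_apply] at hfix
  exact h (hfix ▸ hc)

section PermuteOnModule

variable {σ : Equiv.Perm C} (hX : G.IsModule X) (hα : G.IsProperColoring α)
  (hσ : ∀ c ∉ α '' X, σ c = c) (hβX : ∀ x ∈ X, β x = σ (α x)) (hβout : ∀ v ∉ X, β v = α v)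
include hX hα hσ hβX hβout

theorem apply_eq_perm_of_adj_mem {v x : V} (hvx : G.Adj v x) (hx : x ∈ X) : β v = σ (α v) := by
  by_cases hv : v ∈ X
  · exact hβX v hv
  · rw [hβout v hv, hσ _ (hα.notMem_image_of_adj hX hv hx hvx)]

theorem isProperColoring_of_perm_on_module : G.IsProperColoring β := by
  intro u v huv
  by_cases h : u ∈ X ∨ v ∈ X
  · have hu : β u = σ (α u) :=
      h.elim (hβX u) (apply_eq_perm_of_adj_mem hX hα hσ hβX hβout huv)
    have hv : β v = σ (α v) :=
      h.elim (apply_eq_perm_of_adj_mem hX hα hσ hβX hβout huv.symm) (hβX v)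
    rw [hu, hv]
    exact σ.injective.ne (hα u v huv)
  · obtain ⟨hu, hv⟩ := not_or.mp h
    rw [hβout u hu, hβout v hv]
    exact hα u v huv

theorem isFrozenColoring_of_perm_on_module (hfrozen : G.IsFrozenColoring α) :
    G.IsFrozenColoring β := by
  intro v c
  obtain ⟨u, hvu, rfl⟩ := hfrozen v c
  by_cases hu : u ∈ X
  swap
  · exact ⟨u, hvu, hβout u hu⟩
  have hpre : σ.symm (α u) ∈ α '' X :=
    Equiv.Perm.symm_apply_mem_of_forall_notMem hσ ⟨u, hu, rfl⟩
  by_cases hv : v ∈ X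
  · obtain ⟨w, hvw, hw⟩ := hfrozen v (σ.symm (α u))
    have hβw : β w = σ (α w) := hvw.elim (fun h ↦ h ▸ hβX v hv)
      (fun h ↦ apply_eq_perm_of_adj_mem hX hα hσ hβX hβout h.symm hv)
    exact ⟨w, hvw, by rw [hβw, hw, Equiv.apply_symm_apply]⟩
  · have hadj : G.Adj v u := hvu.resolve_left (by rintro rfl; exact hv hu)
    obtain ⟨x, hx, hxc⟩ := hpre
    exact ⟨x, Or.inr (hX.adj_of_adj hv hu hadj hx), by
      rw [hβX x hx, hxc, Equiv.apply_symm_apply]⟩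

end PermuteOnModule

end SimpleGraph

theorem stmt_6_general {V : Type*} [DecidableEq V] (G : SimpleGraph V)
    (Δ : ℕ)
    (X : Finset V)
    (hX : ∀ v ∉ X, (∀ x ∈ X, G.Adj v x) ∨ (∀ x ∈ X, ¬ G.Adj v x))
    (α : V → Fin (Δ + 1))
    (hproper : ∀ u v, G.Adj u v → α u ≠ α v)
    (hfrozen : ∀ v c, ∃ u, (u = v ∨ G.Adj v u) ∧ α u = c)
    (a b : Fin (Δ + 1))
    (ha : ∃ x ∈ X, α x = a) (hb : ∃ x ∈ X, α x = b)
    (β : V → Fin (Δ + 1))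
    (hβ : ∀ v, β v = if v ∈ X then
        (if α v = a then b else if α v = b then a else α v) else α v) :
    (∀ u v, G.Adj u v → β u ≠ β v) ∧
      (∀ v c, ∃ u, (u = v ∨ G.Adj v u) ∧ β u = c) := by
  obtain ⟨xa, hxa, rfl⟩ := ha
  obtain ⟨xb, hxb, rfl⟩ := hb
  have hσ : ∀ c ∉ α '' X, Equiv.swap (α xa) (α xb) c = c := fun c hc ↦
    Equiv.swap_apply_of_ne_of_ne (fun h ↦ hc ⟨xa, hxa, h.symm⟩) (fun h ↦ hc ⟨xb, hxb, h.symm⟩)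
  have hβX : ∀ x ∈ (X : Set V), β x = Equiv.swap (α xa) (α xb) (α x) := fun x (hx : x ∈ X) ↦ by
    rw [hβ, if_pos hx, Equiv.swap_apply_def]
  have hβout : ∀ v ∉ (X : Set V), β v = α v := fun v (hv : v ∉ X) ↦ by rw [hβ, if_neg hv]
  exact ⟨SimpleGraph.isProperColoring_of_perm_on_module hX hproper hσ hβX hβout,
    SimpleGraph.isFrozenColoring_of_perm_on_module hX hproper hσ hβX hβout hfrozen⟩

/-- Let `X` be a module of a graph `G` with maximum degree `Δ`, let `α`
be a frozen `(Δ+1)`-colouring of `G`, and let `a ≠ b` be two colours both appearing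
on `X`. Then the colouring `β` obtained from `α` by swapping the colours `a` and `b`
on the vertices of `X` is also a frozen `(Δ+1)`-colouring of `G`. -/
theorem stmt_6 {V : Type*} [Fintype V] [DecidableEq V] (G : SimpleGraph V)
    [DecidableRel G.Adj] (Δ : ℕ) (hΔ : ∀ v, G.degree v ≤ Δ)
    (X : Finset V)
    (hX : ∀ v ∉ X, (∀ x ∈ X, G.Adj v x) ∨ (∀ x ∈ X, ¬ G.Adj v x))
    (α : V → Fin (Δ + 1))
    (hproper : ∀ u v, G.Adj u v → α u ≠ α v)
    (hfrozen : ∀ v c, ∃ u, (u = v ∨ G.Adj v u) ∧ α u = c)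
    (a b : Fin (Δ + 1)) (hab : a ≠ b)
    (ha : ∃ x ∈ X, α x = a) (hb : ∃ x ∈ X, α x = b)
    (β : V → Fin (Δ + 1))
    (hβ : ∀ v, β v = if v ∈ X then
        (if α v = a then b else if α v = b then a else α v) else α v) :
    (∀ u v, G.Adj u v → β u ≠ β v) ∧
      (∀ v c, ∃ u, (u = v ∨ G.Adj v u) ∧ β u = c) :=
  stmt_6_general G Δ X hX α hproper hfrozen a b ha hb β hβ
end

section
/- Let H be a graph on n vertices with maximum degree Δ, let T ⊆ V(H), let β be a proper (Δ+1)-colouring of H[V∖T], and let σ be a linear order on V(H) putting all vertices of V∖T before all vertices of T. Then the number of frugal extensions of β to H (proper (Δ+1)-colourings extending β such that no colour appears more than once in any open neighbourhood) is at most ∏_{v∈T}(Δ+1−d_σ(v)), where d_σ(v) is the number of neighbours of v preceding v in σ. -/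
/-!
Colour the vertices in the order `σ`. When `v ∈ T` is reached, its `d_σ(v)` earlier neighbours
already carry pairwise distinct colours (frugality), and `v` must avoid all of them (properness),
so at most `Δ + 1 - d_σ(v)` colours remain for `v`. Recording, for each `v ∈ T`, the position of
its colour among the colours still available determines the whole extension, by induction along `σ`.
-/

open Finset

section Greedy

variable {V C ι : Type*} [DecidableEq C] [LT ι] [WellFoundedLT ι] {P : (V → C) → Prop}
  {T : Finset V} {r : V → ι} {S : (V → C) → V → Finset C}

theorem eq_of_forall_idxOf_eq (hS : ∀ f g v, (∀ u, r u < r v → f u = g u) → S f v = S g v)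
    (hmem : ∀ f, P f → ∀ v ∈ T, f v ∈ S f v) (hout : ∀ f g, P f → P g → ∀ v ∉ T, f v = g v)
    {f g : V → C} (hf : P f) (hg : P g)
    (hidx : ∀ v ∈ T, (S f v).toList.idxOf (f v) = (S g v).toList.idxOf (g v)) : f = g := by
  funext v
  induction v using (InvImage.wf r wellFounded_lt).induction with
  | _ v ih =>
    by_cases hv : v ∈ T
    · have hSv : S f v = S g v := hS f g v ih
      have hidx_v := hidx v hv
      rw [hSv] at hidx_v
      exact (List.idxOf_inj (mem_toList.2 (hSv ▸ hmem f hf v hv))).1 hidx_v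
    · exact hout f g hf hg v hv

theorem Nat.card_le_prod_of_greedy (k : V → ℕ)
    (hS : ∀ f g v, (∀ u, r u < r v → f u = g u) → S f v = S g v)
    (hmem : ∀ f, P f → ∀ v ∈ T, f v ∈ S f v) (hcard : ∀ f, P f → ∀ v ∈ T, #(S f v) ≤ k v)
    (hout : ∀ f g, P f → P g → ∀ v ∉ T, f v = g v) :
    Nat.card {f // P f} ≤ ∏ v ∈ T, k v := by
  classical
  let code : {f // P f} → ∀ v : T, Fin (k v) := fun f v =>
    ⟨(S f.1 v).toList.idxOf (f.1 v),
      (List.idxOf_lt_length_of_mem (mem_toList.2 (hmem f.1 f.2 v v.2))).trans_le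
        ((S f.1 v).length_toList ▸ hcard f.1 f.2 v v.2)⟩
  have hcode : Function.Injective code := fun f g h =>
    Subtype.ext <| eq_of_forall_idxOf_eq hS hmem hout f.2 g.2 fun v hv =>
      congrArg Fin.val (congrFun h ⟨v, hv⟩)
  calc Nat.card {f // P f} ≤ Nat.card (∀ v : T, Fin (k v)) :=
        Nat.card_le_card_of_injective code hcode
    _ = ∏ v ∈ T, k v := by simp [prod_attach T k]

end Greedy

namespace SimpleGraph

variable {V C ι : Type*} [Fintype V] (H : SimpleGraph V) [DecidableRel H.Adj] [LinearOrder ι]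

def earlierNeighborFinset (r : V → ι) (v : V) : Finset V :=
  (H.neighborFinset v).filter fun u => r u < r v

variable {H}

@[simp]
theorem mem_earlierNeighborFinset {r : V → ι} {u v : V} :
    u ∈ H.earlierNeighborFinset r v ↔ H.Adj v u ∧ r u < r v := by
  simp [earlierNeighborFinset]

theorem card_image_earlierNeighborFinset {α : V → C} [DecidableEq C]
    (hfrugal : ∀ v u w, H.Adj v u → H.Adj v w → u ≠ w → α u ≠ α w) (r : V → ι) (v : V) :
    #((H.earlierNeighborFinset r v).image α) = #(H.earlierNeighborFinset r v) :=
  card_image_of_injOn fun u hu w hw huw => by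
    by_contra hne
    exact hfrugal v u w (mem_earlierNeighborFinset.1 hu).1 (mem_earlierNeighborFinset.1 hw).1
      hne huw

end SimpleGraph

theorem stmt_10_general {V : Type*} [Fintype V] (H : SimpleGraph V)
    [DecidableRel H.Adj] (Δ : ℕ)
    (T : Finset V) (β : V → Fin (Δ + 1))
    (σ : V ≃ Fin (Fintype.card V)) :
    Nat.card {α : V → Fin (Δ + 1) //
        (∀ u v, H.Adj u v → α u ≠ α v) ∧
        (∀ v u w, H.Adj v u → H.Adj v w → u ≠ w → α u ≠ α w) ∧
        ∀ v ∉ T, α v = β v} ≤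
      ∏ v ∈ T, (Δ + 1 - ((H.neighborFinset v).filter (fun u => σ u < σ v)).card) := by
  refine Nat.card_le_prod_of_greedy (r := σ)
    (S := fun α v => univ \ (H.earlierNeighborFinset σ v).image α) _ ?_ ?_ ?_ ?_
  · intro α α' v hagree
    exact congrArg (univ \ ·) <|
      image_congr fun u hu => hagree u (SimpleGraph.mem_earlierNeighborFinset.1 hu).2
  · intro α ⟨hproper, _⟩ v _
    simpa using fun u hadj _ => hproper u v hadj.symm
  · intro α ⟨_, hfrugal, _⟩ v _
    rw [card_univ_sdiff, SimpleGraph.card_image_earlierNeighborFinset hfrugal, Fintype.card_fin]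
    rfl
  · intro α α' ⟨_, _, hα⟩ ⟨_, _, hα'⟩ v hv
    rw [hα v hv, hα' v hv]

/-- Let `H` have maximum degree `Δ`, `T ⊆ V`, `β` a proper
`(Δ+1)`-colouring of `H[V∖T]`, and `σ` a linear order putting `V∖T` before `T`.
Then the number of frugal proper extensions of `β` to `H` is at most
`∏_{v∈T} (Δ+1-d_σ(v))`. -/
theorem stmt_10 {V : Type*} [Fintype V] [DecidableEq V] (H : SimpleGraph V)
    [DecidableRel H.Adj] (Δ : ℕ) (hΔ : ∀ v, H.degree v ≤ Δ)
    (T : Finset V) (β : V → Fin (Δ + 1))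
    (hβ : ∀ u v, u ∉ T → v ∉ T → H.Adj u v → β u ≠ β v)
    (σ : V ≃ Fin (Fintype.card V))
    (hσ : ∀ u ∉ T, ∀ v ∈ T, σ u < σ v) :
    Nat.card {α : V → Fin (Δ + 1) //
        (∀ u v, H.Adj u v → α u ≠ α v) ∧
        (∀ v u w, H.Adj v u → H.Adj v w → u ≠ w → α u ≠ α w) ∧
        ∀ v ∉ T, α v = β v} ≤
      ∏ v ∈ T, (Δ + 1 - ((H.neighborFinset v).filter (fun u => σ u < σ v)).card) :=
  stmt_10_general H Δ T β σ
end

section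
/- For every ℓ ≥ 2 and Δ ≥ 2, the graph J(ℓ) (defined below) is a connected Δ-regular graph on ℓ(Δ+1) vertices whose number of frozen (Δ+1)-colourings is at least ((Δ−1)!)^ℓ. -/
/-!
Call `j` the level of the vertex `(i, j)`. Every vertex `(i, j)` has exactly one neighbour on
each level `b ≠ j`, namely `(neighborBlock Δ i j b, b)`, and none on its own level; this gives
Δ-regularity. The interior levels of a block are adjacent to the whole block, so each block is
connected, and the edges `(i, Δ) (i + 1, 0)` join consecutive blocks.

If every block is coloured by a permutation of the levels fixing `0` and `Δ`, a neighbour on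
level `b` has the same colour as `(i, b)`: it lies in the same block unless `b ∈ {0, Δ}`. Hence
such a colouring is proper, and frozen because every colour occurs in the block of each vertex.
Permuting the `Δ - 1` interior levels independently in each block gives `((Δ - 1)!) ^ ℓ`
distinct frozen colourings.
-/

/-- The graph `J(ℓ)`: vertices `v_i^j` for `i ∈ ℤ/ℓ`, `j ∈ Fin (Δ+1)` (index `0`
plays the role of superscript `1` and `Fin.last Δ` that of superscript `Δ+1`).
Within each block `i` all pairs are adjacent except `v_i^1 v_i^{Δ+1}`, and
`v_{i+1}^1` is adjacent to `v_i^{Δ+1}`. -/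
def J (Δ ℓ : ℕ) : SimpleGraph (ZMod ℓ × Fin (Δ + 1)) :=
  SimpleGraph.fromRel (fun x y =>
    (x.1 = y.1 ∧ ¬(x.2 = 0 ∧ y.2 = Fin.last Δ) ∧ ¬(x.2 = Fin.last Δ ∧ y.2 = 0)) ∨
    (x.1 = y.1 + 1 ∧ x.2 = 0 ∧ y.2 = Fin.last Δ))

namespace J

open Equiv

variable {Δ ℓ : ℕ}

def neighborBlock (Δ : ℕ) (i : ZMod ℓ) (j b : Fin (Δ + 1)) : ZMod ℓ :=
  if j = 0 ∧ b = Fin.last Δ then i - 1 else if j = Fin.last Δ ∧ b = 0 then i + 1 else i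

section

variable [NeZero Δ]

theorem adj_iff {i a : ZMod ℓ} {j b : Fin (Δ + 1)} :
    (J Δ ℓ).Adj (i, j) (a, b) ↔ b ≠ j ∧ a = neighborBlock Δ i j b := by
  have := (Fin.last_pos' (n := Δ)).ne
  simp only [J, SimpleGraph.fromRel_adj, neighborBlock, ne_eq, Prod.mk.injEq]
  split_ifs <;> grind

theorem adj_neighborBlock (i : ZMod ℓ) {j b : Fin (Δ + 1)} (hb : b ≠ j) :
    (J Δ ℓ).Adj (i, j) (neighborBlock Δ i j b, b) :=
  adj_iff.2 ⟨hb, rfl⟩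

def neighborSetEquiv (v : ZMod ℓ × Fin (Δ + 1)) :
    {u // (J Δ ℓ).Adj v u} ≃ {b : Fin (Δ + 1) // b ≠ v.2} where
  toFun u := ⟨u.1.2, (adj_iff.1 u.2).1⟩
  invFun b := ⟨(neighborBlock Δ v.1 v.2 b, b), adj_neighborBlock v.1 b.2⟩
  left_inv u := Subtype.ext (Prod.ext (adj_iff.1 u.2).2.symm rfl)
  right_inv _ := rfl

theorem card_neighbors (v : ZMod ℓ × Fin (Δ + 1)) : Nat.card {u // (J Δ ℓ).Adj v u} = Δ := by
  rw [Nat.card_congr (neighborSetEquiv v), Nat.card_eq_fintype_card,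
    Fintype.card_subtype_compl, Fintype.card_fin, Fintype.card_subtype_eq, Nat.add_sub_cancel]

end

theorem reachable_within_block (hΔ : 2 ≤ Δ) (i : ZMod ℓ) (j b : Fin (Δ + 1)) :
    (J Δ ℓ).Reachable (i, j) (i, b) := by
  have : NeZero Δ := ⟨by omega⟩
  obtain ⟨m, hm0, hml⟩ : ∃ m : Fin (Δ + 1), m ≠ 0 ∧ m ≠ Fin.last Δ :=
    ⟨⟨1, by omega⟩, by simp [Fin.ext_iff]; omega⟩
  have reach_m (b) : (J Δ ℓ).Reachable (i, m) (i, b) := by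
    by_cases hb : b = m
    · rw [hb]
    · exact (adj_iff.2 ⟨hb, by simp [neighborBlock, hm0, hml]⟩).reachable
  exact (reach_m j).symm.trans (reach_m b)

theorem reachable_succ (hΔ : 2 ≤ Δ) (i : ZMod ℓ) (j b : Fin (Δ + 1)) :
    (J Δ ℓ).Reachable (i, j) (i + 1, b) := by
  have : NeZero Δ := ⟨by omega⟩
  have hbridge : (J Δ ℓ).Adj (i, Fin.last Δ) (i + 1, 0) :=
    adj_iff.2 ⟨Fin.last_pos'.ne, by simp [neighborBlock, Fin.last_pos'.ne']⟩
  exact (reachable_within_block hΔ i j _).trans <| hbridge.reachable.trans <|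
    reachable_within_block hΔ _ _ b

theorem connected [NeZero ℓ] (hΔ : 2 ≤ Δ) : (J Δ ℓ).Connected := by
  have reach_cast (k : ℕ) : (J Δ ℓ).Reachable (0, 0) ((k : ZMod ℓ), 0) := by
    induction k with
    | zero => rw [Nat.cast_zero]
    | succ k ih => exact ih.trans (Nat.cast_succ (R := ZMod ℓ) k ▸ reachable_succ hΔ _ _ _)
  have reach (v : ZMod ℓ × Fin (Δ + 1)) : (J Δ ℓ).Reachable (0, 0) v := by
    obtain ⟨k, hk⟩ := ZMod.natCast_zmod_surjective v.1
    exact (reach_cast k).trans (hk ▸ reachable_within_block hΔ _ _ _)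
  exact ⟨fun u v => (reach u).symm.trans (reach v)⟩

theorem apply_neighborBlock (σ : ZMod ℓ → Perm (Fin (Δ + 1))) (h0 : ∀ i, σ i 0 = 0)
    (hl : ∀ i, σ i (Fin.last Δ) = Fin.last Δ) (i : ZMod ℓ) (j b : Fin (Δ + 1)) :
    σ (neighborBlock Δ i j b) b = σ i b := by
  unfold neighborBlock
  split_ifs <;> simp [*]

section
variable [NeZero Δ] (σ : ZMod ℓ → Perm (Fin (Δ + 1))) (h0 : ∀ i, σ i 0 = 0)
    (hl : ∀ i, σ i (Fin.last Δ) = Fin.last Δ)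
include h0 hl

theorem perm_colouring_proper (u v : ZMod ℓ × Fin (Δ + 1)) (huv : (J Δ ℓ).Adj u v) :
    σ u.1 u.2 ≠ σ v.1 v.2 := by
  obtain ⟨hne, hblock⟩ := adj_iff.1 huv
  rw [hblock, apply_neighborBlock σ h0 hl]
  exact (σ u.1).injective.ne hne.symm

theorem perm_colouring_frozen (v : ZMod ℓ × Fin (Δ + 1)) (c : Fin (Δ + 1)) :
    ∃ u, (u = v ∨ (J Δ ℓ).Adj v u) ∧ σ u.1 u.2 = c := by
  by_cases hc : (σ v.1).symm c = v.2
  · exact ⟨v, Or.inl rfl, by rw [← hc, Equiv.apply_symm_apply]⟩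
  · exact ⟨(_, _), Or.inr (adj_neighborBlock v.1 hc), by
      rw [apply_neighborBlock σ h0 hl, Equiv.apply_symm_apply]⟩

end

theorem card_interior [NeZero Δ] :
    Nat.card {j : Fin (Δ + 1) // j ≠ 0 ∧ j ≠ Fin.last Δ} = Δ - 1 := by
  have h : (0 : Fin (Δ + 1)) ≠ Fin.last Δ := Fin.last_pos'.ne
  simp only [← not_or, Nat.card_eq_fintype_card, Fintype.card_subtype_compl, Fintype.card_fin]
  rw [Fintype.card_subtype_or_disjoint _ _ (by simpa [Pi.disjoint_iff] using h)]
  simp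

end J

theorem Equiv.Perm.ofSubtype_uncurry_injective {ι α : Type*} {p : α → Prop} [DecidablePred p] :
    Function.Injective fun (τ : ι → Perm (Subtype p)) (v : ι × α) => Perm.ofSubtype (τ v.1) v.2 :=
  fun _ _ h => funext fun i => Perm.ofSubtype_injective <| Equiv.ext fun a => congrFun h (i, a)

/-- For `ℓ ≥ 2` and `Δ ≥ 2`, the graph `J(ℓ)` is a connected
`Δ`-regular graph on `ℓ(Δ+1)` vertices with at least `((Δ-1)!)^ℓ` frozen
`(Δ+1)`-colourings. -/
theorem stmt_14 (Δ ℓ : ℕ) (hℓ : 2 ≤ ℓ) (hΔ : 2 ≤ Δ) :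
    (J Δ ℓ).Connected ∧
      Nat.card (ZMod ℓ × Fin (Δ + 1)) = ℓ * (Δ + 1) ∧
      (∀ v : ZMod ℓ × Fin (Δ + 1), Nat.card {u // (J Δ ℓ).Adj v u} = Δ) ∧
      (Nat.factorial (Δ - 1)) ^ ℓ ≤
        Nat.card {α : ZMod ℓ × Fin (Δ + 1) → Fin (Δ + 1) //
          (∀ u v, (J Δ ℓ).Adj u v → α u ≠ α v) ∧
          (∀ v c, ∃ u, (u = v ∨ (J Δ ℓ).Adj v u) ∧ α u = c)} := by
  have : NeZero Δ := ⟨by omega⟩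
  have : NeZero ℓ := ⟨by omega⟩
  refine ⟨J.connected hΔ, by rw [Nat.card_prod, Nat.card_zmod, Nat.card_fin], J.card_neighbors, ?_⟩
  let Interior := {j : Fin (Δ + 1) // j ≠ 0 ∧ j ≠ Fin.last Δ}
  have fixes (τ : ZMod ℓ → Equiv.Perm Interior) (j : Fin (Δ + 1)) (hj : j = 0 ∨ j = Fin.last Δ)
      (i : ZMod ℓ) : Equiv.Perm.ofSubtype (τ i) j = j :=
    Equiv.Perm.ofSubtype_apply_of_not_mem _ (by tauto)
  let colouring (τ : ZMod ℓ → Equiv.Perm Interior) : {α : ZMod ℓ × Fin (Δ + 1) → Fin (Δ + 1) //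
      (∀ u v, (J Δ ℓ).Adj u v → α u ≠ α v) ∧
      (∀ v c, ∃ u, (u = v ∨ (J Δ ℓ).Adj v u) ∧ α u = c)} :=
    ⟨fun v => Equiv.Perm.ofSubtype (τ v.1) v.2,
      J.perm_colouring_proper _ (fixes τ 0 (.inl rfl)) (fixes τ _ (.inr rfl)),
      J.perm_colouring_frozen _ (fixes τ 0 (.inl rfl)) (fixes τ _ (.inr rfl))⟩
  calc (Δ - 1).factorial ^ ℓ = Nat.card (ZMod ℓ → Equiv.Perm Interior) := by
        rw [Nat.card_fun, Nat.card_perm, J.card_interior, Nat.card_zmod]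
    _ ≤ _ := Nat.card_le_card_of_injective colouring
        fun _ _ h => Equiv.Perm.ofSubtype_uncurry_injective (congrArg Subtype.val h)
end

section
/- The number of pairs (G, α) where G is a graph on a fixed labelled vertex set of size n = k(Δ+1) and α is a frozen (Δ+1)-colouring of G equals the number of labelled k-lifts of K_{Δ+1}, which is (n choose k, k, …, k) · (k!)^{\binom{Δ+1}{2}} = n!/(k!)^{Δ+1} · (k!)^{Δ(Δ+1)/2}. -/
open Function Equiv

namespace Stmt17

variable {Δ k n : ℕ}

/-- Pairs `(c, c')` of colours with `c < c'`, encoded as `⟨c', c⟩`. -/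
abbrev P (Δ : ℕ) := Σ j : Fin (Δ + 1), Fin j.val

def low (p : P Δ) : Fin (Δ + 1) := ⟨p.2.val, p.2.isLt.trans p.1.isLt⟩

def high (p : P Δ) : Fin (Δ + 1) := p.1

lemma low_lt_high (p : P Δ) : low p < high p := p.2.isLt

def pairOf {c c' : Fin (Δ + 1)} (h : c < c') : P Δ := ⟨c', ⟨c.val, h⟩⟩

@[simp] lemma low_pairOf {c c' : Fin (Δ + 1)} (h : c < c') : low (pairOf h) = c := rfl

@[simp] lemma high_pairOf {c c' : Fin (Δ + 1)} (h : c < c') : high (pairOf h) = c' := rfl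

/-- The matching relation on `Fin (Δ+1) × Fin k` induced by a family of
permutations indexed by pairs of colours. -/
def Rel (π : P Δ → Equiv.Perm (Fin k)) (a b : Fin (Δ + 1) × Fin k) : Prop :=
  (∃ p, low p = a.1 ∧ high p = b.1 ∧ π p a.2 = b.2) ∨
  (∃ p, low p = b.1 ∧ high p = a.1 ∧ π p b.2 = a.2)

lemma Rel.symm {π : P Δ → Equiv.Perm (Fin k)} {a b} (h : Rel π a b) : Rel π b a :=
  Or.symm h

lemma Rel.fst_ne {π : P Δ → Equiv.Perm (Fin k)} {a b} (h : Rel π a b) : a.1 ≠ b.1 := by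
  rcases h with ⟨p, h1, h2, -⟩ | ⟨p, h1, h2, -⟩
  · exact fun hc => absurd (h1 ▸ h2 ▸ low_lt_high p) (by rw [hc]; exact lt_irrefl _)
  · exact fun hc => absurd (h1 ▸ h2 ▸ low_lt_high p) (by rw [hc]; exact lt_irrefl _)

lemma rel_iff {π : P Δ → Equiv.Perm (Fin k)} {a b : Fin (Δ + 1) × Fin k}
    (h : a.1 < b.1) : Rel π a b ↔ π (pairOf h) a.2 = b.2 := by
  constructor
  · rintro (⟨p, h1, h2, h3⟩ | ⟨p, h1, h2, h3⟩)
    · obtain ⟨j, d⟩ := p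
      have hj : j = b.1 := h2
      subst hj
      have hd : d = ⟨a.1.val, h⟩ := by
        have hv : d.val = a.1.val := congrArg Fin.val h1
        exact Fin.ext hv
      subst hd
      exact h3
    · have := low_lt_high p
      rw [h1, h2] at this
      exact absurd this (lt_asymm h)
  · intro hp
    exact Or.inl ⟨pairOf h, rfl, rfl, hp⟩

lemma rel_right_unique {π : P Δ → Equiv.Perm (Fin k)} {a b b' : Fin (Δ + 1) × Fin k}
    (h1 : Rel π a b) (h2 : Rel π a b') (h : b.1 = b'.1) : b = b' := by
  obtain ⟨x, i⟩ := b
  obtain ⟨x', j⟩ := b'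
  simp only at h
  subst h
  rcases lt_trichotomy a.1 x with hlt | heq | hgt
  · rw [rel_iff hlt] at h1 h2
    exact congrArg (Prod.mk x) (show i = j from h1.symm.trans h2)
  · exact absurd heq h1.fst_ne
  · rw [show Rel π a (x, i) ↔ Rel π (x, i) a from ⟨Rel.symm, Rel.symm⟩] at h1
    rw [show Rel π a (x, j) ↔ Rel π (x, j) a from ⟨Rel.symm, Rel.symm⟩] at h2
    rw [rel_iff (show (x, i).1 < a.1 from hgt)] at h1
    rw [rel_iff (show (x, j).1 < a.1 from hgt)] at h2
    rw [← h2] at h1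
    exact congrArg (Prod.mk x) (show i = j from (π (pairOf hgt)).injective h1)

/-- The lift graph determined by `σ` and matchings `π`. -/
def liftGraph (σ : Fin n ≃ Fin (Δ + 1) × Fin k) (π : P Δ → Equiv.Perm (Fin k)) :
    SimpleGraph (Fin n) where
  Adj u v := Rel π (σ u) (σ v)
  symm := ⟨fun _ _ h => Rel.symm h⟩
  loopless := ⟨fun _ h => Rel.fst_ne h rfl⟩


variable {G : SimpleGraph (Fin n)} {α : Fin n → Fin (Δ + 1)}

lemma unique_color (hdeg : ∀ v, Nat.card {u // G.Adj v u} ≤ Δ)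
    (hfroz : ∀ v c, ∃ u, (u = v ∨ G.Adj v u) ∧ α u = c)
    {v u₁ u₂ : Fin n} (h₁ : u₁ = v ∨ G.Adj v u₁) (h₂ : u₂ = v ∨ G.Adj v u₂)
    (hc : α u₁ = α u₂) : u₁ = u₂ := by
  classical
  have : Fintype {u // u = v ∨ G.Adj v u} := Fintype.ofFinite _
  have : Fintype {u // G.Adj v u} := Fintype.ofFinite _
  have hinj : Function.Injective fun u : {u // u = v ∨ G.Adj v u} =>
      if h : G.Adj v u.1 then some (⟨u.1, h⟩ : {u // G.Adj v u}) else none := by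
    rintro ⟨u₁, hu₁⟩ ⟨u₂, hu₂⟩ h
    simp only at h
    split_ifs at h with ha hb hb
    · have huv : u₁ = u₂ := by simpa using h
      exact Subtype.ext huv
    · exact Subtype.ext (((hu₁.resolve_right ha)).trans ((hu₂.resolve_right hb)).symm)
  have hle : Fintype.card {u // u = v ∨ G.Adj v u} ≤ Δ + 1 := by
    calc Fintype.card {u // u = v ∨ G.Adj v u}
        ≤ Fintype.card (Option {u // G.Adj v u}) := Fintype.card_le_of_injective _ hinj
      _ = Fintype.card {u // G.Adj v u} + 1 := Fintype.card_option
      _ ≤ Δ + 1 := by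
          have := hdeg v
          rw [Nat.card_eq_fintype_card] at this
          omega
  have hsurj : Function.Surjective fun u : {u // u = v ∨ G.Adj v u} => α u.1 := by
    intro c
    obtain ⟨u, hu, hcu⟩ := hfroz v c
    exact ⟨⟨u, hu⟩, hcu⟩
  have hge : Δ + 1 ≤ Fintype.card {u // u = v ∨ G.Adj v u} := by
    have := Fintype.card_le_of_surjective _ hsurj
    simpa using this
  have hcardeq : Fintype.card {u // u = v ∨ G.Adj v u} = Fintype.card (Fin (Δ + 1)) := by
    rw [Fintype.card_fin]; omega
  have hginj : Function.Injective fun u : {u // u = v ∨ G.Adj v u} => α u.1 :=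
    (Finite.injective_iff_surjective_of_equiv (Fintype.equivOfCardEq hcardeq)).mpr hsurj
  exact congrArg Subtype.val (hginj (a₁ := ⟨u₁, h₁⟩) (a₂ := ⟨u₂, h₂⟩) hc)

lemma exists_nbr (hfroz : ∀ v c, ∃ u, (u = v ∨ G.Adj v u) ∧ α u = c)
    {v : Fin n} {c : Fin (Δ + 1)} (h : c ≠ α v) : ∃ u, G.Adj v u ∧ α u = c := by
  obtain ⟨u, hu | hu, hcu⟩ := hfroz v c
  · subst hu; exact absurd hcu.symm h
  · exact ⟨u, hu, hcu⟩

noncomputable def nbr (hfroz : ∀ v c, ∃ u, (u = v ∨ G.Adj v u) ∧ α u = c)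
    {v : Fin n} {c : Fin (Δ + 1)} (h : c ≠ α v) : Fin n :=
  (exists_nbr hfroz h).choose

lemma nbr_adj (hfroz : ∀ v c, ∃ u, (u = v ∨ G.Adj v u) ∧ α u = c)
    {v : Fin n} {c : Fin (Δ + 1)} (h : c ≠ α v) : G.Adj v (nbr hfroz h) :=
  (exists_nbr hfroz h).choose_spec.1

lemma nbr_color (hfroz : ∀ v c, ∃ u, (u = v ∨ G.Adj v u) ∧ α u = c)
    {v : Fin n} {c : Fin (Δ + 1)} (h : c ≠ α v) : α (nbr hfroz h) = c :=
  (exists_nbr hfroz h).choose_spec.2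

lemma eq_nbr (hdeg : ∀ v, Nat.card {u // G.Adj v u} ≤ Δ)
    (hfroz : ∀ v c, ∃ u, (u = v ∨ G.Adj v u) ∧ α u = c)
    {v : Fin n} {c : Fin (Δ + 1)} (h : c ≠ α v) {u : Fin n}
    (hadj : G.Adj v u) (hcu : α u = c) : u = nbr hfroz h :=
  unique_color hdeg hfroz (Or.inr hadj) (Or.inr (nbr_adj hfroz h))
    (hcu.trans (nbr_color hfroz h).symm)

lemma card_fiber (hdeg : ∀ v, Nat.card {u // G.Adj v u} ≤ Δ)
    (hfroz : ∀ v c, ∃ u, (u = v ∨ G.Adj v u) ∧ α u = c)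
    (hn : n = k * (Δ + 1)) (c : Fin (Δ + 1)) : Nat.card {v // α v = c} = k := by
  classical
  have key : ∀ c', Nat.card {v // α v = c'} = Nat.card {v // α v = c} := by
    intro c'
    rcases eq_or_ne c' c with rfl | hne
    · rfl
    · have hne' : ∀ v : {v // α v = c'}, c ≠ α v.1 := by
        intro v; rw [v.2]; exact hne.symm
      refine Nat.card_eq_of_bijective
        (fun v => ⟨nbr hfroz (hne' v), nbr_color hfroz (hne' v)⟩) ⟨?_, ?_⟩
      · rintro v w hvw
        have h1 : nbr hfroz (hne' v) = nbr hfroz (hne' w) := congrArg Subtype.val hvw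
        apply Subtype.ext
        refine unique_color hdeg hfroz (v := nbr hfroz (hne' v))
          (Or.inr ((nbr_adj hfroz (hne' v)).symm))
          (Or.inr (h1 ▸ (nbr_adj hfroz (hne' w)).symm)) (v.2.trans w.2.symm)
      · rintro ⟨w, hw⟩
        have hcw : c' ≠ α w := by rw [hw]; exact hne
        refine ⟨⟨nbr hfroz hcw, nbr_color hfroz hcw⟩, Subtype.ext ?_⟩
        exact (eq_nbr hdeg hfroz (hne' ⟨nbr hfroz hcw, nbr_color hfroz hcw⟩)
          ((nbr_adj hfroz hcw).symm) hw).symm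
  have h1 : ∑ c' : Fin (Δ + 1), Fintype.card {v // α v = c'} = n := by
    rw [← Fintype.card_sigma, Fintype.card_congr (Equiv.sigmaFiberEquiv α), Fintype.card_fin]
  have h2 : ∀ c', Fintype.card {v // α v = c'} = Nat.card {v // α v = c} := by
    intro c'; rw [← Nat.card_eq_fintype_card]; exact key c'
  rw [Finset.sum_congr rfl (fun c' _ => h2 c'), Finset.sum_const, Finset.card_univ,
    Fintype.card_fin] at h1
  have h1' : (Δ + 1) * Nat.card {v // α v = c} = k * (Δ + 1) := by
    rw [← hn]
    simpa [smul_eq_mul] using h1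
  exact Nat.eq_of_mul_eq_mul_left (Nat.succ_pos Δ) (h1'.trans (mul_comm k (Δ + 1)))


/-- The subtype of frozen-coloured graphs. -/
abbrev Frozen (Δ n : ℕ) := {p : SimpleGraph (Fin n) × (Fin n → Fin (Δ + 1)) //
    (∀ v, Nat.card {u // p.1.Adj v u} ≤ Δ) ∧
    (∀ u v, p.1.Adj u v → p.2 u ≠ p.2 v) ∧
    (∀ v c, ∃ u, (u = v ∨ p.1.Adj v u) ∧ p.2 u = c)}

lemma liftGraph_deg (σ : Fin n ≃ Fin (Δ + 1) × Fin k) (π : P Δ → Equiv.Perm (Fin k))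
    (v : Fin n) : Nat.card {u // (liftGraph σ π).Adj v u} ≤ Δ := by
  classical
  have hinj : Function.Injective (fun u : {u // (liftGraph σ π).Adj v u} =>
      (⟨(σ u.1).1, fun h => (Rel.fst_ne u.2) h.symm⟩ : {c : Fin (Δ + 1) // c ≠ (σ v).1})) := by
    rintro u w h
    have h' : (σ u.1).1 = (σ w.1).1 := congrArg Subtype.val h
    exact Subtype.ext (σ.injective (rel_right_unique u.2 w.2 h'))
  calc Nat.card {u // (liftGraph σ π).Adj v u}
      ≤ Nat.card {c : Fin (Δ + 1) // c ≠ (σ v).1} := Nat.card_le_card_of_injective _ hinj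
    _ = Δ := by
        rw [Nat.card_eq_fintype_card, Fintype.card_subtype_compl,
          Fintype.card_subtype_eq, Fintype.card_fin]
        omega

lemma liftGraph_frozen (σ : Fin n ≃ Fin (Δ + 1) × Fin k) (π : P Δ → Equiv.Perm (Fin k)) :
    ∀ v c, ∃ u, (u = v ∨ (liftGraph σ π).Adj v u) ∧ (σ u).1 = c := by
  intro v c
  rcases lt_trichotomy (σ v).1 c with hlt | heq | hgt
  · refine ⟨σ.symm (c, π (pairOf hlt) (σ v).2), Or.inr ?_, ?_⟩
    · show Rel π (σ v) (σ (σ.symm _))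
      rw [Equiv.apply_symm_apply]
      exact Or.inl ⟨pairOf hlt, rfl, rfl, rfl⟩
    · rw [Equiv.apply_symm_apply]
  · exact ⟨v, Or.inl rfl, heq⟩
  · refine ⟨σ.symm (c, (π (pairOf hgt)).symm (σ v).2), Or.inr ?_, ?_⟩
    · show Rel π (σ v) (σ (σ.symm _))
      rw [Equiv.apply_symm_apply]
      exact Or.inr ⟨pairOf hgt, rfl, rfl, by simp⟩
    · rw [Equiv.apply_symm_apply]

/-- The frozen pair determined by lift data. -/
def mkS (σ : Fin n ≃ Fin (Δ + 1) × Fin k) (π : P Δ → Equiv.Perm (Fin k)) : Frozen Δ n :=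
  ⟨(liftGraph σ π, fun v => (σ v).1), fun v => liftGraph_deg σ π v,
    fun _ _ h => Rel.fst_ne h, liftGraph_frozen σ π⟩

section Recover

variable (σ : Fin n ≃ Fin (Δ + 1) × Fin k) (s : Frozen Δ n)

lemma base_color (hσ : ∀ v, (σ v).1 = s.1.2 v) (p : P Δ) (i : Fin k) : s.1.2 (σ.symm (low p, i)) = low p := by
  rw [← hσ, Equiv.apply_symm_apply]

lemma high_ne (hσ : ∀ v, (σ v).1 = s.1.2 v) (p : P Δ) (i : Fin k) : high p ≠ s.1.2 (σ.symm (low p, i)) := by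
  rw [base_color σ s hσ]
  exact (low_lt_high p).ne'

/-- Recover the matchings from a frozen pair together with a compatible labelling. -/
noncomputable def recoverπ (hσ : ∀ v, (σ v).1 = s.1.2 v) (p : P Δ) : Equiv.Perm (Fin k) := by
  refine Equiv.ofBijective
    (fun i => (σ (nbr s.2.2.2 (high_ne σ s hσ p i))).2) ?_
  rw [← Finite.injective_iff_bijective]
  intro i j hij
  have hci : (σ (nbr s.2.2.2 (high_ne σ s hσ p i))).1 = high p := by
    rw [hσ]; exact nbr_color _ _
  have hcj : (σ (nbr s.2.2.2 (high_ne σ s hσ p j))).1 = high p := by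
    rw [hσ]; exact nbr_color _ _
  have hσeq : σ (nbr s.2.2.2 (high_ne σ s hσ p i)) = σ (nbr s.2.2.2 (high_ne σ s hσ p j)) :=
    Prod.ext (hci.trans hcj.symm) hij
  have hueq := σ.injective hσeq
  have hveq : σ.symm (low p, i) = σ.symm (low p, j) := by
    refine unique_color s.2.1 s.2.2.2 (v := nbr s.2.2.2 (high_ne σ s hσ p i))
      (Or.inr (nbr_adj s.2.2.2 (high_ne σ s hσ p i)).symm)
      (Or.inr ?_) ?_
    · rw [hueq]
      exact (nbr_adj s.2.2.2 (high_ne σ s hσ p j)).symm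
    · rw [base_color σ s hσ, base_color σ s hσ]
  simpa using σ.symm.injective hveq

lemma recoverπ_eq_iff (hσ : ∀ v, (σ v).1 = s.1.2 v) (p : P Δ) (i j : Fin k) :
    recoverπ σ s hσ p i = j ↔ s.1.1.Adj (σ.symm (low p, i)) (σ.symm (high p, j)) := by
  have happ : recoverπ σ s hσ p i = (σ (nbr s.2.2.2 (high_ne σ s hσ p i))).2 := rfl
  have hc : (σ (nbr s.2.2.2 (high_ne σ s hσ p i))).1 = high p := by
    rw [hσ]; exact nbr_color _ _
  constructor
  · intro hj
    have : σ (nbr s.2.2.2 (high_ne σ s hσ p i)) = (high p, j) := by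
      rw [← hj, happ]
      exact Prod.ext hc rfl
    have hw : σ.symm (high p, j) = nbr s.2.2.2 (high_ne σ s hσ p i) := by
      rw [← this, Equiv.symm_apply_apply]
    rw [hw]
    exact nbr_adj s.2.2.2 (high_ne σ s hσ p i)
  · intro hadj
    have hcw : s.1.2 (σ.symm (high p, j)) = high p := by
      rw [← hσ, Equiv.apply_symm_apply]
    have := eq_nbr s.2.1 s.2.2.2 (high_ne σ s hσ p i) hadj hcw
    rw [happ, ← this, Equiv.apply_symm_apply]

end Recover

lemma recoverπ_mkS (σ : Fin n ≃ Fin (Δ + 1) × Fin k) (π : P Δ → Equiv.Perm (Fin k))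
    (hσ : ∀ v, (σ v).1 = (mkS σ π).1.2 v) : recoverπ σ (mkS σ π) hσ = π := by
  funext p
  apply Equiv.ext
  intro i
  rw [recoverπ_eq_iff]
  show Rel π (σ (σ.symm (low p, i))) (σ (σ.symm (high p, π p i)))
  rw [Equiv.apply_symm_apply, Equiv.apply_symm_apply]
  exact Or.inl ⟨p, rfl, rfl, rfl⟩

lemma liftGraph_recoverπ (σ : Fin n ≃ Fin (Δ + 1) × Fin k) (s : Frozen Δ n)
    (hσ : ∀ v, (σ v).1 = s.1.2 v) : liftGraph σ (recoverπ σ s hσ) = s.1.1 := by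
  ext u v
  show Rel (recoverπ σ s hσ) (σ u) (σ v) ↔ s.1.1.Adj u v
  have huv : ∀ u v : Fin n, ∀ p : P Δ, low p = (σ u).1 → high p = (σ v).1 →
      (recoverπ σ s hσ p (σ u).2 = (σ v).2 ↔ s.1.1.Adj u v) := by
    intro u v p h1 h2
    rw [recoverπ_eq_iff]
    have hu : (low p, (σ u).2) = σ u := Prod.ext h1 rfl
    have hv : (high p, (σ v).2) = σ v := Prod.ext h2 rfl
    rw [hu, hv, Equiv.symm_apply_apply, Equiv.symm_apply_apply]
  constructor
  · rintro (⟨p, h1, h2, h3⟩ | ⟨p, h1, h2, h3⟩)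
    · exact (huv u v p h1 h2).mp h3
    · exact ((huv v u p h1 h2).mp h3).symm
  · intro h
    rcases lt_trichotomy (σ u).1 (σ v).1 with hlt | heq | hgt
    · exact Or.inl ⟨pairOf hlt, rfl, rfl, (huv u v (pairOf hlt) rfl rfl).mpr h⟩
    · rw [hσ u, hσ v] at heq
      exact absurd heq (s.2.2.1 u v h)
    · exact Or.inr ⟨pairOf hgt, rfl, rfl, (huv v u (pairOf hgt) rfl rfl).mpr h.symm⟩

/-- The intermediate type: lift data together with the frozen pair it determines. -/
abbrev T (Δ k n : ℕ) := {t : (Fin n ≃ Fin (Δ + 1) × Fin k) × Frozen Δ n //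
    ∀ v, (t.1 v).1 = t.2.1.2 v}

/-- Lift data is equivalent to a compatible pair of a labelling and a frozen pair. -/
noncomputable def equiv1 :
    ((Fin n ≃ Fin (Δ + 1) × Fin k) × (P Δ → Equiv.Perm (Fin k))) ≃ T Δ k n where
  toFun x := ⟨(x.1, mkS x.1 x.2), fun _ => rfl⟩
  invFun t := (t.1.1, recoverπ t.1.1 t.1.2 t.2)
  left_inv := by
    rintro ⟨σ, π⟩
    simp only
    rw [recoverπ_mkS]
  right_inv := by
    rintro ⟨⟨σ, s⟩, hcompat⟩
    apply Subtype.ext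
    simp only
    refine Prod.ext rfl (Subtype.ext (Prod.ext ?_ ?_))
    · exact liftGraph_recoverπ σ s hcompat
    · exact funext hcompat


/-- Restriction of a compatible labelling to a colour fibre. -/
def restr (σ : Fin n ≃ Fin (Δ + 1) × Fin k) (α : Fin n → Fin (Δ + 1))
    (hσ : ∀ v, (σ v).1 = α v) (c : Fin (Δ + 1)) : {v // α v = c} ≃ Fin k where
  toFun v := (σ v.1).2
  invFun i := ⟨σ.symm (c, i), by rw [← hσ, Equiv.apply_symm_apply]⟩
  left_inv v := by
    apply Subtype.ext
    have h1 : ((c, (σ v.1).2) : Fin (Δ + 1) × Fin k) = σ v.1 :=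
      Prod.ext ((hσ v.1).trans v.2).symm rfl
    show σ.symm (c, (σ v.1).2) = v.1
    rw [h1, Equiv.symm_apply_apply]
  right_inv i := by
    show (σ (σ.symm (c, i))).2 = i
    rw [Equiv.apply_symm_apply]

/-- A fixed equivalence between each colour fibre of a frozen pair and `Fin k`. -/
noncomputable def fibE (s : Frozen Δ n) (hn : n = k * (Δ + 1)) (c : Fin (Δ + 1)) :
    {v // s.1.2 v = c} ≃ Fin k :=
  Fintype.equivFinOfCardEq (by
    rw [← Nat.card_eq_fintype_card]
    exact card_fiber s.2.1 s.2.2.2 hn c)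

/-- Build a labelling from a frozen pair and per-colour permutations. -/
noncomputable def buildσ (s : Frozen Δ n) (hn : n = k * (Δ + 1))
    (ρ : Fin (Δ + 1) → Equiv.Perm (Fin k)) : Fin n ≃ Fin (Δ + 1) × Fin k where
  toFun v := (s.1.2 v, ρ (s.1.2 v) (fibE s hn (s.1.2 v) ⟨v, rfl⟩))
  invFun x := ((fibE s hn x.1).symm ((ρ x.1).symm x.2)).1
  left_inv v := by
    show ((fibE s hn (s.1.2 v)).symm
      ((ρ (s.1.2 v)).symm (ρ (s.1.2 v) (fibE s hn (s.1.2 v) ⟨v, rfl⟩)))).1 = v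
    rw [Equiv.symm_apply_apply, Equiv.symm_apply_apply]
  right_inv x := by
    obtain ⟨c, i⟩ := x
    have key : ∀ (w : Fin n) (h : s.1.2 w = c),
        fibE s hn c ⟨w, h⟩ = (ρ c).symm i →
        ((s.1.2 w, ρ (s.1.2 w) (fibE s hn (s.1.2 w) ⟨w, rfl⟩)) : Fin (Δ + 1) × Fin k)
          = (c, i) := by
      intro w h hE
      subst h
      rw [hE, Equiv.apply_symm_apply]
    exact key _ ((fibE s hn c).symm ((ρ c).symm i)).2
      (by rw [Subtype.coe_eta, Equiv.apply_symm_apply])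


/-- Compatible pairs are equivalent to a frozen pair plus per-colour permutations. -/
noncomputable def equiv2 (hn : n = k * (Δ + 1)) :
    T Δ k n ≃ Frozen Δ n × (Fin (Δ + 1) → Equiv.Perm (Fin k)) where
  toFun t := (t.1.2, fun c => (fibE t.1.2 hn c).symm.trans (restr t.1.1 t.1.2.1.2 t.2 c))
  invFun x := ⟨(buildσ x.1 hn x.2, x.1), fun _ => rfl⟩
  left_inv t := by
    apply Subtype.ext
    refine Prod.ext ?_ rfl
    apply Equiv.ext
    intro v
    show (t.1.2.1.2 v,
      ((fibE t.1.2 hn (t.1.2.1.2 v)).symm.trans (restr t.1.1 t.1.2.1.2 t.2 (t.1.2.1.2 v)))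
        (fibE t.1.2 hn (t.1.2.1.2 v) ⟨v, rfl⟩)) = t.1.1 v
    rw [Equiv.trans_apply, Equiv.symm_apply_apply]
    exact Prod.ext (t.2 v).symm rfl
  right_inv x := by
    obtain ⟨s, ρ⟩ := x
    refine Prod.ext rfl ?_
    funext c
    apply Equiv.ext
    intro i
    show (buildσ s hn ρ ((fibE s hn c).symm i).1).2 = ρ c i
    have key : ∀ (w : Fin n) (h : s.1.2 w = c), fibE s hn c ⟨w, h⟩ = i →
        ρ (s.1.2 w) (fibE s hn (s.1.2 w) ⟨w, rfl⟩) = ρ c i := by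
      intro w h hE
      subst h
      rw [hE]
    exact key _ ((fibE s hn c).symm i).2
      (by rw [Subtype.coe_eta, Equiv.apply_symm_apply])

end Stmt17

/-- The number of pairs `(G, α)` where `G` is a graph on the labelled
vertex set `Fin n`, `n = k(Δ+1)`, with maximum degree at most `Δ`, and `α` is a
frozen `(Δ+1)`-colouring of `G`, equals the number of labelled `k`-lifts of
`K_{Δ+1}`, namely `n!/(k!)^{Δ+1} · (k!)^{Δ(Δ+1)/2}` (stated multiplicatively to
avoid division). -/
theorem stmt_17 (Δ k n : ℕ) (hn : n = k * (Δ + 1)) :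
    Nat.card {p : SimpleGraph (Fin n) × (Fin n → Fin (Δ + 1)) //
        (∀ v, Nat.card {u // p.1.Adj v u} ≤ Δ) ∧
        (∀ u v, p.1.Adj u v → p.2 u ≠ p.2 v) ∧
        (∀ v c, ∃ u, (u = v ∨ p.1.Adj v u) ∧ p.2 u = c)} *
      (Nat.factorial k) ^ (Δ + 1) =
    Nat.factorial n * (Nat.factorial k) ^ (Δ * (Δ + 1) / 2) := by
  classical
  have h1 : Nat.card (Stmt17.Frozen Δ n) * (Nat.factorial k) ^ (Δ + 1)
      = Nat.card (Stmt17.Frozen Δ n × (Fin (Δ + 1) → Equiv.Perm (Fin k))) := by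
    rw [Nat.card_prod, Nat.card_fun, Nat.card_eq_fintype_card (α := Equiv.Perm (Fin k)),
      Fintype.card_perm, Fintype.card_fin,
      Nat.card_eq_fintype_card (α := Fin (Δ + 1)), Fintype.card_fin]
  have h2 := Nat.card_congr (Stmt17.equiv2 (Δ := Δ) (k := k) (n := n) hn)
  have h3 := Nat.card_congr (Stmt17.equiv1 (Δ := Δ) (k := k) (n := n))
  have h4 : Nat.card ((Fin n ≃ Fin (Δ + 1) × Fin k) × (Stmt17.P Δ → Equiv.Perm (Fin k)))
      = Nat.factorial n * (Nat.factorial k) ^ (Δ * (Δ + 1) / 2) := by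
    rw [Nat.card_prod]
    congr 1
    · have e : Fin n ≃ Fin (Δ + 1) × Fin k :=
        (finCongr (hn.trans (mul_comm k (Δ + 1)))).trans finProdFinEquiv.symm
      rw [Nat.card_eq_fintype_card, Fintype.card_equiv e, Fintype.card_fin]
    · rw [Nat.card_fun, Nat.card_eq_fintype_card (α := Equiv.Perm (Fin k)),
        Fintype.card_perm, Fintype.card_fin]
      congr 1
      rw [Nat.card_eq_fintype_card (α := Stmt17.P Δ), Fintype.card_sigma]
      simp only [Fintype.card_fin]
      rw [Fin.sum_univ_eq_sum_range (fun i => i) (Δ + 1), Finset.sum_range_id]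
      congr 1
      rw [Nat.add_sub_cancel, Nat.mul_comm]
  show Nat.card (Stmt17.Frozen Δ n) * (Nat.factorial k) ^ (Δ + 1)
      = Nat.factorial n * (Nat.factorial k) ^ (Δ * (Δ + 1) / 2)
  rw [h1, ← h2, ← h3, h4]
end

section
/- Let Δ ≥ 3 and n ≥ 2 with Δ+1 dividing n, and let G be the graph J(n/(Δ+1)). If α is a proper (Δ+1)-colouring of G chosen uniformly at random, then the probability that α is frozen is at least (1/(2(Δ+1)Δ))^{n/(Δ+1)}. -/
/-- The per-block colouring determined by a permutation of the middle colours. -/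
def blockCol (Δ : ℕ) (σ : Equiv.Perm (Fin (Δ - 1))) (j : Fin (Δ + 1)) : Fin (Δ + 1) :=
  if h : 0 < j.val ∧ j.val < Δ then
    ⟨(σ ⟨j.val - 1, by omega⟩).val + 1, by
      have := (σ ⟨j.val - 1, by omega⟩).isLt; omega⟩
  else j

lemma blockCol_injective (Δ : ℕ) (σ : Equiv.Perm (Fin (Δ - 1))) :
    Function.Injective (blockCol Δ σ) := by
  intro j j' h
  unfold blockCol at h
  split_ifs at h with h1 h2 h2
  · rw [Fin.mk.injEq] at h
    have hv : (⟨j.val - 1, by omega⟩ : Fin (Δ - 1)) = ⟨j'.val - 1, by omega⟩ :=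
      σ.injective (Fin.ext (by omega))
    rw [Fin.mk.injEq] at hv
    exact Fin.ext (by omega)
  · exfalso
    have hlt := (σ ⟨j.val - 1, by omega⟩).isLt
    have hv : (σ ⟨j.val - 1, by omega⟩).val + 1 = j'.val := congrArg Fin.val h
    omega
  · exfalso
    have hlt := (σ ⟨j'.val - 1, by omega⟩).isLt
    have hv : j.val = (σ ⟨j'.val - 1, by omega⟩).val + 1 := congrArg Fin.val h
    omega
  · exact h

lemma blockCol_surjective (Δ : ℕ) (σ : Equiv.Perm (Fin (Δ - 1))) :
    Function.Surjective (blockCol Δ σ) :=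
  Finite.surjective_of_injective (blockCol_injective Δ σ)

lemma blockCol_end (Δ : ℕ) (σ : Equiv.Perm (Fin (Δ - 1))) (j : Fin (Δ + 1))
    (h : ¬(0 < j.val ∧ j.val < Δ)) : blockCol Δ σ j = j := dif_neg h

/-- The frozen colouring built from a family of middle permutations. -/
def frozenMap (Δ ℓ : ℕ) (σ : ZMod ℓ → Equiv.Perm (Fin (Δ - 1))) :
    ZMod ℓ × Fin (Δ + 1) → Fin (Δ + 1) := fun p => blockCol Δ (σ p.1) p.2

lemma frozenMap_proper (Δ ℓ : ℕ) (hΔ : 1 ≤ Δ) (σ : ZMod ℓ → Equiv.Perm (Fin (Δ - 1))) :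
    ∀ u v, (J Δ ℓ).Adj u v → frozenMap Δ ℓ σ u ≠ frozenMap Δ ℓ σ v := by
  intro u v huv
  rw [J, SimpleGraph.fromRel_adj] at huv
  obtain ⟨hne, hrel⟩ := huv
  have key : ∀ x y : ZMod ℓ × Fin (Δ + 1), x ≠ y →
      (x.1 = y.1 + 1 ∧ x.2 = 0 ∧ y.2 = Fin.last Δ) →
      frozenMap Δ ℓ σ x ≠ frozenMap Δ ℓ σ y := by
    rintro x y hxy ⟨-, h0, hl⟩
    unfold frozenMap
    rw [h0, hl, blockCol_end _ _ _ (by simp), blockCol_end _ _ _ (by simp [Fin.last])]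
    intro hc
    have h2 : (0:ℕ) = Δ := by simpa [Fin.last] using congrArg Fin.val hc
    omega
  rcases hrel with (⟨hi, -⟩ | h2) | (⟨hi, -⟩ | h2)
  · unfold frozenMap
    rw [hi]
    intro hc
    exact hne (Prod.ext hi (blockCol_injective Δ (σ v.1) hc))
  · exact key u v hne h2
  · unfold frozenMap
    rw [← hi]
    intro hc
    exact hne (Prod.ext hi.symm (blockCol_injective Δ (σ v.1) hc))
  · exact fun hc => key v u hne.symm h2 hc.symm

lemma frozenMap_frozen (Δ ℓ : ℕ) (hΔ : 1 ≤ Δ) (σ : ZMod ℓ → Equiv.Perm (Fin (Δ - 1))) :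
    ∀ v c, ∃ u, (u = v ∨ (J Δ ℓ).Adj v u) ∧ frozenMap Δ ℓ σ u = c := by
  intro v c
  obtain ⟨i, j⟩ := v
  obtain ⟨j', hj'⟩ := blockCol_surjective Δ (σ i) c
  by_cases hmid : 0 < j.val ∧ j.val < Δ
  · -- middle vertex: whole block is in the closed neighbourhood
    refine ⟨(i, j'), ?_, hj'⟩
    by_cases hjj : j' = j
    · exact Or.inl (by rw [hjj])
    · refine Or.inr ?_
      rw [J, SimpleGraph.fromRel_adj]
      refine ⟨by simp [hjj, Ne.symm hjj], Or.inl (Or.inl ⟨rfl, ?_, ?_⟩)⟩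
      · rintro ⟨h0, -⟩
        have : j.val = (0 : Fin (Δ + 1)).val := congrArg Fin.val h0
        simp at this
        simp [this] at hmid
      · rintro ⟨hl, -⟩
        have : j.val = (Fin.last Δ).val := congrArg Fin.val hl
        simp [Fin.last] at this
        omega
  · rcases Nat.lt_or_ge j.val Δ with hjΔ | hjΔ
    · -- j = 0
      have hj0 : j = 0 := Fin.ext (by simp only [Fin.val_zero]; omega)
      by_cases hcl : c = Fin.last Δ
      · refine ⟨(i - 1, Fin.last Δ), Or.inr ?_, ?_⟩
        · rw [J, SimpleGraph.fromRel_adj]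
          refine ⟨?_, Or.inl (Or.inr ⟨by ring, hj0, rfl⟩)⟩
          intro hc
          have := congrArg (fun p => (Prod.snd p).val) hc
          simp [hj0, Fin.last] at this
          omega
        · rw [frozenMap, blockCol_end _ _ _ (by simp [Fin.last]), hcl]
      · refine ⟨(i, j'), ?_, hj'⟩
        have hj'l : j' ≠ Fin.last Δ := by
          intro h
          rw [h, blockCol_end _ _ _ (by simp [Fin.last])] at hj'
          exact hcl hj'.symm
        by_cases hjj : j' = j
        · exact Or.inl (by rw [hjj])
        · refine Or.inr ?_
          rw [J, SimpleGraph.fromRel_adj]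
          refine ⟨by simp [hjj, Ne.symm hjj], Or.inl (Or.inl ⟨rfl, ?_, ?_⟩)⟩
          · rintro ⟨-, hl⟩; exact hj'l hl
          · rintro ⟨hl, -⟩
            have := congrArg Fin.val hl
            simp [hj0, Fin.last] at this
            omega
    · -- j = last
      have hjl : j = Fin.last Δ := Fin.ext (by simp [Fin.last]; omega)
      by_cases hc0 : c = (0 : Fin (Δ + 1))
      · refine ⟨(i + 1, 0), Or.inr ?_, ?_⟩
        · rw [J, SimpleGraph.fromRel_adj]
          refine ⟨?_, Or.inr (Or.inr ⟨rfl, rfl, hjl⟩)⟩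
          intro hc
          have := congrArg (fun p => (Prod.snd p).val) hc
          simp [hjl, Fin.last] at this
          omega
        · rw [frozenMap, blockCol_end _ _ _ (by simp), hc0]
      · refine ⟨(i, j'), ?_, hj'⟩
        have hj'0 : j' ≠ 0 := by
          intro h
          rw [h, blockCol_end _ _ _ (by simp)] at hj'
          exact hc0 hj'.symm
        by_cases hjj : j' = j
        · exact Or.inl (by rw [hjj])
        · refine Or.inr ?_
          rw [J, SimpleGraph.fromRel_adj]
          refine ⟨by simp [hjj, Ne.symm hjj], Or.inl (Or.inl ⟨rfl, ?_, ?_⟩)⟩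
          · rintro ⟨h0, -⟩
            have := congrArg Fin.val h0
            simp [hjl, Fin.last] at this
            omega
          · rintro ⟨-, h0⟩; exact hj'0 h0

lemma frozenMap_injective (Δ ℓ : ℕ) (hΔ : 1 ≤ Δ) :
    Function.Injective (frozenMap Δ ℓ) := by
  intro σ σ' h
  funext i
  ext k
  have hk := k.isLt
  have hj : (0:ℕ) < k.val + 1 ∧ k.val + 1 < Δ := by omega
  have := congrFun h (i, ⟨k.val + 1, by omega⟩)
  unfold frozenMap blockCol at this
  rw [dif_pos hj, dif_pos hj] at this
  have hv := congrArg Fin.val this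
  simp only [Nat.add_sub_cancel] at hv
  have : (⟨k.val, hk⟩ : Fin (Δ - 1)) = k := Fin.ext rfl
  rw [this] at hv
  omega

lemma J_adj_block {Δ ℓ : ℕ} (i : ZMod ℓ) (j j' : Fin (Δ + 1)) (hne : j ≠ j')
    (h1 : ¬(j = 0 ∧ j' = Fin.last Δ)) (h2 : ¬(j = Fin.last Δ ∧ j' = 0)) :
    (J Δ ℓ).Adj (i, j) (i, j') := by
  rw [J, SimpleGraph.fromRel_adj]
  exact ⟨by simp [hne], Or.inl (Or.inl ⟨rfl, h1, h2⟩)⟩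

lemma card_proper_le (Δ ℓ : ℕ) (hΔ : 3 ≤ Δ) [NeZero ℓ] :
    Nat.card {α : ZMod ℓ × Fin (Δ + 1) → Fin (Δ + 1) //
      ∀ u v, (J Δ ℓ).Adj u v → α u ≠ α v} ≤ (2 * (Δ + 1).factorial) ^ ℓ := by
  classical
  haveI : NeZero Δ := ⟨by omega⟩
  set Ω := {α : ZMod ℓ × Fin (Δ + 1) → Fin (Δ + 1) //
      ∀ u v, (J Δ ℓ).Adj u v → α u ≠ α v} with hΩ
  have key : ∀ (α : Ω) (i : ZMod ℓ) (j j' : Fin (Δ + 1)), j ≠ j' →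
      ¬(j = 0 ∧ j' = Fin.last Δ) → ¬(j = Fin.last Δ ∧ j' = 0) →
      α.1 (i, j) ≠ α.1 (i, j') :=
    fun α i j j' hne h1 h2 => α.2 _ _ (J_adj_block i j j' hne h1 h2)
  have hcl : ∀ (j : Fin Δ), j.castSucc ≠ Fin.last Δ := by
    intro j h
    have hv : j.val = Δ := congrArg Fin.val h
    exact absurd hv (Nat.ne_of_lt j.isLt)
  set F : Ω → (ZMod ℓ → ((Fin (Δ + 1) ↪ Fin (Δ + 1)) ⊕ (Fin Δ ↪ Fin (Δ + 1)))) :=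
    fun α i =>
      if h : α.1 (i, 0) = α.1 (i, Fin.last Δ) then
        Sum.inr ⟨fun j => α.1 (i, j.castSucc), by
          intro j j' hea
          by_contra hne
          exact key α i j.castSucc j'.castSucc ((Fin.castSucc_injective Δ).ne hne)
            (fun hh => hcl j' hh.2) (fun hh => hcl j hh.1) hea⟩
      else
        Sum.inl ⟨fun j => α.1 (i, j), by
          intro j j' hea
          by_contra hne
          by_cases hA : j = 0 ∧ j' = Fin.last Δ
          · rw [hA.1, hA.2] at hea; exact h hea
          · by_cases hB : j = Fin.last Δ ∧ j' = 0
            · rw [hB.1, hB.2] at hea; exact h hea.symm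
            · exact key α i j j' hne hA hB hea⟩ with hF
  have hFinj : Function.Injective F := by
    intro α α' hFe
    apply Subtype.ext
    funext p
    obtain ⟨i, j⟩ := p
    have hi := congrFun hFe i
    simp only [hF] at hi
    by_cases h : α.1 (i, 0) = α.1 (i, Fin.last Δ)
    · by_cases h' : α'.1 (i, 0) = α'.1 (i, Fin.last Δ)
      · rw [dif_pos h, dif_pos h', Sum.inr.injEq] at hi
        have hmid : ∀ k : Fin Δ, α.1 (i, k.castSucc) = α'.1 (i, k.castSucc) :=
          fun k => DFunLike.congr_fun hi k
        refine Fin.lastCases ?_ (fun k => hmid k) j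
        have h00 : ((0 : Fin Δ).castSucc) = (0 : Fin (Δ + 1)) := Fin.ext (by simp)
        calc α.1 (i, Fin.last Δ) = α.1 (i, 0) := h.symm
          _ = α'.1 (i, 0) := by rw [← h00]; exact hmid 0
          _ = α'.1 (i, Fin.last Δ) := h'
      · rw [dif_pos h, dif_neg h'] at hi
        exact absurd hi (by simp)
    · by_cases h' : α'.1 (i, 0) = α'.1 (i, Fin.last Δ)
      · rw [dif_neg h, dif_pos h'] at hi
        exact absurd hi (by simp)
      · rw [dif_neg h, dif_neg h', Sum.inl.injEq] at hi
        exact DFunLike.congr_fun hi j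
  calc Nat.card Ω ≤ Nat.card (ZMod ℓ → ((Fin (Δ + 1) ↪ Fin (Δ + 1)) ⊕ (Fin Δ ↪ Fin (Δ + 1)))) :=
        Nat.card_le_card_of_injective F hFinj
    _ = (2 * (Δ + 1).factorial) ^ ℓ := by
        rw [Nat.card_eq_fintype_card, Fintype.card_fun, ZMod.card]
        congr 1
        rw [Fintype.card_sum, Fintype.card_embedding_eq, Fintype.card_embedding_eq,
          Fintype.card_fin, Fintype.card_fin, Nat.descFactorial_self,
          Nat.descFactorial_eq_div (Nat.le_succ Δ)]
        have h1 : Δ + 1 - Δ = 1 := by omega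
        rw [h1]
        simp only [Nat.succ_eq_add_one, Nat.factorial_one, Nat.div_one]
        omega

/-- For `Δ ≥ 3` and `n = ℓ(Δ+1) ≥ 2` with `Δ+1 ∣ n`, a uniformly
random proper `(Δ+1)`-colouring of `J(n/(Δ+1))` is frozen with probability at
least `(1/(2(Δ+1)Δ))^{n/(Δ+1)}`, i.e. the number of frozen colourings is at least
`(1/(2(Δ+1)Δ))^ℓ` times the number of proper colourings. -/
theorem stmt_18 (Δ ℓ n : ℕ) (hΔ : 3 ≤ Δ) (hn : n = ℓ * (Δ + 1)) (hn2 : 2 ≤ n) :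
    ((1 : ℝ) / (2 * (Δ + 1) * Δ)) ^ (n / (Δ + 1)) *
        (Nat.card {α : ZMod ℓ × Fin (Δ + 1) → Fin (Δ + 1) //
          ∀ u v, (J Δ ℓ).Adj u v → α u ≠ α v} : ℝ) ≤
      (Nat.card {α : ZMod ℓ × Fin (Δ + 1) → Fin (Δ + 1) //
          (∀ u v, (J Δ ℓ).Adj u v → α u ≠ α v) ∧
          (∀ v c, ∃ u, (u = v ∨ (J Δ ℓ).Adj v u) ∧ α u = c)} : ℝ) := by

  have hℓ0 : ℓ ≠ 0 := by rintro rfl; simp at hn; omega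
  haveI : NeZero ℓ := ⟨hℓ0⟩
  have hℓ : n / (Δ + 1) = ℓ := by rw [hn]; exact Nat.mul_div_cancel _ (by omega)
  rw [hℓ]
  -- lower bound on frozen colourings
  have hlow : ((Δ - 1).factorial : ℝ) ^ ℓ ≤
      (Nat.card {α : ZMod ℓ × Fin (Δ + 1) → Fin (Δ + 1) //
          (∀ u v, (J Δ ℓ).Adj u v → α u ≠ α v) ∧
          (∀ v c, ∃ u, (u = v ∨ (J Δ ℓ).Adj v u) ∧ α u = c)} : ℝ) := by
    have hinj : Function.Injective
        (fun σ : ZMod ℓ → Equiv.Perm (Fin (Δ - 1)) =>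
          (⟨frozenMap Δ ℓ σ, frozenMap_proper Δ ℓ (by omega) σ,
            frozenMap_frozen Δ ℓ (by omega) σ⟩ :
            {α : ZMod ℓ × Fin (Δ + 1) → Fin (Δ + 1) //
              (∀ u v, (J Δ ℓ).Adj u v → α u ≠ α v) ∧
              (∀ v c, ∃ u, (u = v ∨ (J Δ ℓ).Adj v u) ∧ α u = c)})) := by
      intro σ σ' h
      exact frozenMap_injective Δ ℓ (by omega) (congrArg Subtype.val h)
    have hc := Nat.card_le_card_of_injective _ hinj
    have hcard : Nat.card (ZMod ℓ → Equiv.Perm (Fin (Δ - 1))) = (Δ - 1).factorial ^ ℓ := by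
      rw [Nat.card_eq_fintype_card, Fintype.card_fun, ZMod.card, Fintype.card_perm,
        Fintype.card_fin]
    rw [hcard] at hc
    exact_mod_cast hc
  -- upper bound on proper colourings
  have hup : (Nat.card {α : ZMod ℓ × Fin (Δ + 1) → Fin (Δ + 1) //
      ∀ u v, (J Δ ℓ).Adj u v → α u ≠ α v} : ℝ) ≤ ((2 * (Δ + 1).factorial : ℕ) : ℝ) ^ ℓ := by
    exact_mod_cast card_proper_le Δ ℓ hΔ
  have hkey : ((1 : ℝ) / (2 * (Δ + 1) * Δ)) ^ ℓ * ((2 * (Δ + 1).factorial : ℕ) : ℝ) ^ ℓ =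
      ((Δ - 1).factorial : ℝ) ^ ℓ := by
    rw [← mul_pow]
    congr 1
    have hfac : (Δ + 1).factorial = (Δ + 1) * (Δ * (Δ - 1).factorial) := by
      rw [Nat.mul_factorial_pred (by omega), Nat.factorial_succ]
    rw [hfac]
    have hΔ0 : (0:ℝ) < Δ := by exact_mod_cast (by omega : 0 < Δ)
    have hK : (2 * ((Δ:ℝ) + 1) * Δ) ≠ 0 := by positivity
    rw [one_div, inv_mul_eq_div, div_eq_iff hK]
    push_cast
    ring
  calc ((1 : ℝ) / (2 * (Δ + 1) * Δ)) ^ ℓ *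
      (Nat.card {α : ZMod ℓ × Fin (Δ + 1) → Fin (Δ + 1) //
        ∀ u v, (J Δ ℓ).Adj u v → α u ≠ α v} : ℝ)
      ≤ ((1 : ℝ) / (2 * (Δ + 1) * Δ)) ^ ℓ * ((2 * (Δ + 1).factorial : ℕ) : ℝ) ^ ℓ := by
        apply mul_le_mul_of_nonneg_left hup (by positivity)
    _ = ((Δ - 1).factorial : ℝ) ^ ℓ := hkey
    _ ≤ _ := hlow
end
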